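/- Let θ be a proper convex piecewise linear function on ℝ^m, z̄ ∈ dom θ, and v̄ ∈ ∂θ(z̄). Then the second-order subdifferential of θ at z̄ relative to v̄ evaluated at 0 is given by ∂²θ(z̄,v̄)(0) = span{a_i − a_j : i,j ∈ K(z̄)} + span{d_i : i ∈ I(z̄)}. -/

import Mathlib

noncomputable section
open Set Filter Topology Metric
open scoped RealInnerProductSpace Pointwise NNReal Classical

/-- `Euc m` is the Euclidean space `ℝ^m`. -/
abbrev Euc (m : ℕ) := EuclideanSpace ℝ (Fin m)

variable {F G : Type*} [NormedAddCommGroup F] [InnerProductSpace ℝ F]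
  [NormedAddCommGroup G] [InnerProductSpace ℝ G]

/-- The (convex) subdifferential of an extended-real-valued function:
`∂θ(z) = {v : θ(z') ≥ θ(z) + ⟨v, z' - z⟩ for all z'}`. -/
def subdiff (θ : F → EReal) (z : F) : Set F :=
  {v | ∀ z', θ z + ((⟪v, z' - z⟫ : ℝ) : EReal) ≤ θ z'}

/-- The Fréchet (regular) normal cone to `Ω` at `x`:
vectors `v` with `limsup_{y → x, y ∈ Ω} ⟨v, y - x⟩ / ‖y - x‖ ≤ 0`. -/
def frechetNormal (Ω : Set F) (x : F) : Set F :=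
  {v | Filter.limsup (fun y => ⟪v, y - x⟫ / ‖y - x‖) (𝓝[Ω] x) ≤ 0}

/-- The limiting (Mordukhovich) normal cone to `Ω` at `x`. -/
def limitingNormal (Ω : Set F) (x : F) : Set F :=
  {v | ∃ xs vs : ℕ → F, (∀ k, xs k ∈ Ω) ∧ Filter.Tendsto xs Filter.atTop (𝓝 x) ∧
    Filter.Tendsto vs Filter.atTop (𝓝 v) ∧ ∀ k, vs k ∈ frechetNormal Ω (xs k)}

/-- Pairing into the `ℓ²`-product of two inner product spaces. -/
def pl2 (x : F) (y : G) : WithLp 2 (F × G) := (WithLp.equiv 2 (F × G)).symm (x, y)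

/-- The second-order subdifferential (generalized Hessian)
`∂²θ(z,v)(u) = {w : (w,-u) ∈ N((z,v); gph ∂θ)}`. -/
def sosd (θ : F → EReal) (z v : F) (u : F) : Set F :=
  {w | pl2 w (-u) ∈ limitingNormal
    {q : WithLp 2 (F × F) | ((WithLp.equiv 2 (F × F)) q).2 ∈ subdiff θ ((WithLp.equiv 2 (F × F)) q).1}
    (pl2 z v)}

/-- The polyhedral domain `{z : ⟨d i, z⟩ ≤ β i for all i}` of a CPWL function. -/
def cpwlDom {m p : ℕ} (d : Fin p → Euc m) (β : Fin p → ℝ) : Set (Euc m) :=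
  {z | ∀ i, ⟪d i, z⟫ ≤ β i}

/-- The CPWL function determined by the data `(a, α, d, β)`:
`θ(z) = max_i (⟨a i, z⟩ - α i)` on its polyhedral domain and `+∞` outside. -/
def cpwlFun {m l p : ℕ} (a : Fin l → Euc m) (α : Fin l → ℝ) (d : Fin p → Euc m)
    (β : Fin p → ℝ) : Euc m → EReal :=
  fun z => if z ∈ cpwlDom d β then (((⨆ i, (⟪a i, z⟫ - α i)) : ℝ) : EReal) else ⊤

/-- Active indices of the max expression at `z`. -/
def Kact {m l p : ℕ} (a : Fin l → Euc m) (α : Fin l → ℝ) (d : Fin p → Euc m) (β : Fin p → ℝ)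
    (z : Euc m) : Set (Fin l) :=
  {i | cpwlFun a α d β z = ((⟪a i, z⟫ - α i : ℝ) : EReal)}

/-- Active indices of the domain inequalities at `z`. -/
def Iact {m p : ℕ} (d : Fin p → Euc m) (β : Fin p → ℝ) (z : Euc m) : Set (Fin p) :=
  {i | ⟪d i, z⟫ = β i}

/-- Convex conic hull: all finite nonnegative combinations of elements of `s`. -/
def coneHull (s : Set F) : Set F :=
  {x | ∃ (n : ℕ) (c : Fin n → ℝ) (y : Fin n → F), (∀ i, 0 ≤ c i) ∧ (∀ i, y i ∈ s) ∧
    x = ∑ i, c i • y i}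

/-- `Spar θ z` is the linear subspace parallel to the affine hull of `∂θ(z)`. -/
def Spar (θ : F → EReal) (z : F) : Submodule ℝ F := (affineSpan ℝ (subdiff θ z)).direction

/-- A convex polyhedron: a finite intersection of closed halfspaces. -/
def IsPolyhedron {V : Type*} [AddCommGroup V] [Module ℝ V] (C : Set V) : Prop :=
  ∃ (N : ℕ) (f : Fin N → V →ₗ[ℝ] ℝ) (b : Fin N → ℝ), C = {x | ∀ i, f i x ≤ b i}

/-- A proper convex piecewise linear function with values in `ℝ ∪ {+∞}`:
its epigraph is a convex polyhedron, it never takes the value `-∞`, and it is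
not identically `+∞`. -/
def IsCPWL {V : Type*} [AddCommGroup V] [Module ℝ V] (f : V → EReal) : Prop :=
  IsPolyhedron {xt : V × ℝ | f xt.1 ≤ (xt.2 : EReal)} ∧ (∀ x, f x ≠ ⊥) ∧ (∃ x, f x ≠ ⊤)

/-- Local argmin set `M_γ(w,v)` of `x ↦ φ(x,w) - ⟨v,x⟩` over the ball `‖x - xb‖ ≤ γ`,
with the convention that minimizers at which the objective is `+∞` are discarded. -/
def argminLoc {n d : ℕ} (φ : Euc n → Euc d → EReal) (xb : Euc n) (γ : ℝ) (w : Euc d)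
    (v : Euc n) : Set (Euc n) :=
  {x | ‖x - xb‖ ≤ γ ∧ φ x w ≠ ⊤ ∧
    ∀ y, ‖y - xb‖ ≤ γ → φ x w - ((⟪v, x⟫ : ℝ) : EReal) ≤ φ y w - ((⟪v, y⟫ : ℝ) : EReal)}

/-- Local optimal value `m_γ(w,v)` of `x ↦ φ(x,w) - ⟨v,x⟩` over the ball `‖x - xb‖ ≤ γ`. -/
def infLoc {n d : ℕ} (φ : Euc n → Euc d → EReal) (xb : Euc n) (γ : ℝ) (w : Euc d)
    (v : Euc n) : EReal :=
  ⨅ x ∈ {x : Euc n | ‖x - xb‖ ≤ γ}, (φ x w - ((⟪v, x⟫ : ℝ) : EReal))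

/-- `xb` is a fully stable locally optimal solution of
`minimize φ(x,wb) - ⟨vb,x⟩` : for some `γ > 0` and neighborhoods `W × V` of `(wb,vb)`,
the local argmin map is single-valued and Lipschitz with value `xb` at `(wb,vb)`, and the
local optimal value function is finite and Lipschitz. -/
def FullyStableSol {n d : ℕ} (φ : Euc n → Euc d → EReal) (xb : Euc n) (wb : Euc d)
    (vb : Euc n) : Prop :=
  ∃ γ > (0 : ℝ), ∃ W ∈ 𝓝 wb, ∃ V ∈ 𝓝 vb,
    (∃ σ : Euc d × Euc n → Euc n,
      (∃ K : ℝ≥0, LipschitzOnWith K σ (W ×ˢ V)) ∧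
      (∀ w ∈ W, ∀ v ∈ V, argminLoc φ xb γ w v = {σ (w, v)}) ∧ σ (wb, vb) = xb) ∧
    (∃ μ : Euc d × Euc n → ℝ,
      (∃ K : ℝ≥0, LipschitzOnWith K μ (W ×ˢ V)) ∧
      ∀ w ∈ W, ∀ v ∈ V, infLoc φ xb γ w v = ((μ (w, v) : ℝ) : EReal))

/-- The partial limiting subdifferential `∂ₓψ(x,w)` defined through the limiting normal
cone to the epigraph of `ψ(·,w)`. -/
def partialSubdiffX {n d : ℕ} (ψ : Euc n → Euc d → EReal) (x : Euc n) (w : Euc d) :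
    Set (Euc n) :=
  {v | ∃ r : ℝ, ψ x w = (r : EReal) ∧
    pl2 v (-1 : ℝ) ∈ limitingNormal
      {q : WithLp 2 (Euc n × ℝ) |
        ψ ((WithLp.equiv 2 (Euc n × ℝ)) q).1 w ≤ ((((WithLp.equiv 2 (Euc n × ℝ)) q).2 : ℝ) : EReal)}
      (pl2 x r)}

/-- The coderivative `D*∂ₓψ(xb,wb,qb)(u)` of the partial subdifferential mapping,
via the limiting normal cone to its graph in `ℝ^n × ℝ^d × ℝ^n`. -/
def coderivPartialSubdiffX {n d : ℕ} (ψ : Euc n → Euc d → EReal) (xb : Euc n) (wb : Euc d)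
    (qb : Euc n) (u : Euc n) : Set (Euc n × Euc d) :=
  {P | pl2 (pl2 P.1 P.2) (-u) ∈ limitingNormal
    {t : WithLp 2 (WithLp 2 (Euc n × Euc d) × Euc n) |
      ((WithLp.equiv 2 (WithLp 2 (Euc n × Euc d) × Euc n)) t).2 ∈ partialSubdiffX ψ
        ((WithLp.equiv 2 (Euc n × Euc d)) (((WithLp.equiv 2 (WithLp 2 (Euc n × Euc d) × Euc n)) t).1)).1
        ((WithLp.equiv 2 (Euc n × Euc d)) (((WithLp.equiv 2 (WithLp 2 (Euc n × Euc d) × Euc n)) t).1)).2}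
    (pl2 (pl2 xb wb) qb)}

/-- Partial Hessian in `x` : the derivative in `x` of the partial gradient in `x`. -/
def hessXX {n d : ℕ} (g : Euc n → Euc d → ℝ) (xb : Euc n) (wb : Euc d) : Euc n →L[ℝ] Euc n :=
  fderiv ℝ (fun x => gradient (fun x' => g x' wb) x) xb

/-- Mixed partial Hessian: derivative in `w` of the partial gradient in `x`. -/
def hessWX {n d : ℕ} (g : Euc n → Euc d → ℝ) (xb : Euc n) (wb : Euc d) : Euc d →L[ℝ] Euc n :=
  fderiv ℝ (fun w => gradient (fun x' => g x' w) xb) wb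

/-! For `c` orthogonal to `L := span {a i - a j : i, j ∈ K(zb)} + span {d i : i ∈ I(zb)}`, the
function `θ` is, near `zb`, the maximum of the pieces active at `zb` on the polyhedron cut out by
the constraints active at `zb`, hence affine along `c`. So every point `(z, v)` of `gph ∂θ` near
`(zb, vb)` can be translated by `(t c, 0)` inside the graph, every Fréchet normal there is
orthogonal to `(c, 0)`, and so is every limiting normal: `∂²θ(zb, vb)(0) ⊆ Lᗮᗮ = L`.

Conversely, `L` is spanned by differences of subgradients at `zb` (`a i - a j`, `(vb + d i) - vb`),
so by convexity of `∂θ(zb)` each `w ∈ L` is `t (u₁ - u₂)` with `u₁, u₂ ∈ ∂θ(zb)`. Monotonicity of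
`∂θ` makes `(w, 0)` a Fréchet normal to the graph at `(zb, v)` whenever `v` and `v + τ w` lie in
`∂θ(zb)` for some `τ > 0`, and such `v` approach `vb`. -/

section NormalCones

variable {Ω : Set F} {x v e : F}

theorem abs_inner_div_norm_le (v h : F) : |⟪v, h⟫ / ‖h‖| ≤ ‖v‖ := by
  rw [abs_div, abs_norm]
  exact div_le_of_le_mul₀ (norm_nonneg _) (norm_nonneg _) (abs_real_inner_le_norm v h)

theorem inner_div_norm_le_iff {δ : ℝ} (hδ : 0 ≤ δ) (v h : F) :
    ⟪v, h⟫ / ‖h‖ ≤ δ ↔ ⟪v, h⟫ ≤ δ * ‖h‖ := by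
  rcases eq_or_ne h 0 with rfl | hh
  · simp [hδ]
  · exact div_le_iff₀ (norm_pos_iff.2 hh)

theorem mem_frechetNormal_iff (hx : x ∈ Ω) :
    v ∈ frechetNormal Ω x ↔ ∀ δ > 0, ∀ᶠ y in 𝓝[Ω] x, ⟪v, y - x⟫ ≤ δ * ‖y - x‖ := by
  have hbdd (y : F) := abs_le.1 (abs_inner_div_norm_le v (y - x))
  have : (𝓝[Ω] x).NeBot := mem_closure_iff_nhdsWithin_neBot.1 (subset_closure hx)
  constructor
  · intro hv δ hδ
    filter_upwards [eventually_lt_of_limsup_lt (hv.trans_lt hδ)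
      (isBoundedUnder_of ⟨‖v‖, fun y => (hbdd y).2⟩)] with y hy
    exact (inner_div_norm_le_iff hδ.le v _).1 hy.le
  · intro h
    refine le_of_forall_pos_le_add fun (δ : ℝ) hδ => ?_
    rw [zero_add]
    refine limsup_le_of_le (isCoboundedUnder_le_of_le _ fun y => (hbdd y).1) ?_
    filter_upwards [h δ hδ] with y hy
    exact (inner_div_norm_le_iff hδ.le v _).2 hy

theorem inner_nonpos_of_mem_frechetNormal (hx : x ∈ Ω)
    (he : ∀ᶠ t in 𝓝[>] (0 : ℝ), x + t • e ∈ Ω) (hv : v ∈ frechetNormal Ω x) : ⟪v, e⟫ ≤ 0 := by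
  by_contra! hpos
  have he0 : e ≠ 0 := by rintro rfl; simp at hpos
  have hδ : 0 < ⟪v, e⟫ / (2 * ‖e‖) := by positivity
  have hpath : Tendsto (fun t : ℝ => x + t • e) (𝓝[>] 0) (𝓝[Ω] x) := by
    refine tendsto_nhdsWithin_iff.2 ⟨?_, he⟩
    exact (Continuous.tendsto' (by fun_prop) 0 x (by simp)).mono_left nhdsWithin_le_nhds
  obtain ⟨t, hbound, ht⟩ := ((hpath.eventually ((mem_frechetNormal_iff hx).1 hv _ hδ)).and
    self_mem_nhdsWithin).exists
  have ht : 0 < t := ht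
  rw [add_sub_cancel_left, inner_smul_right, norm_smul, Real.norm_of_nonneg ht.le] at hbound
  have : ⟪v, e⟫ / (2 * ‖e‖) * (t * ‖e‖) = t * ⟪v, e⟫ / 2 := by field_simp
  nlinarith

theorem inner_eq_zero_of_mem_limitingNormal
    (he : ∀ᶠ y in 𝓝[Ω] x, ∀ᶠ t in 𝓝 (0 : ℝ), y + t • e ∈ Ω) (hv : v ∈ limitingNormal Ω x) :
    ⟪v, e⟫ = 0 := by
  obtain ⟨xs, vs, hmem, hxs, hvs, hfr⟩ := hv
  have hxs' : Tendsto xs atTop (𝓝[Ω] x) :=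
    tendsto_nhdsWithin_iff.2 ⟨hxs, Eventually.of_forall hmem⟩
  refine tendsto_nhds_unique_of_eventuallyEq (hvs.inner tendsto_const_nhds) tendsto_const_nhds ?_
  filter_upwards [hxs'.eventually he] with k hk
  have hk' : ∀ᶠ t in 𝓝 (0 : ℝ), xs k + t • -e ∈ Ω := by
    simpa using (Continuous.tendsto' continuous_neg (0 : ℝ) 0 neg_zero).eventually hk
  have h₁ := inner_nonpos_of_mem_frechetNormal (hmem k) (nhdsWithin_le_nhds hk) (hfr k)
  have h₂ := inner_nonpos_of_mem_frechetNormal (hmem k) (nhdsWithin_le_nhds hk') (hfr k)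
  rw [inner_neg_right] at h₂
  exact le_antisymm h₁ (neg_nonpos.1 h₂)

end NormalCones

section MonotoneGraph

def IsMonotoneOp (T : F → Set F) : Prop :=
  ∀ ⦃z₁ z₂ v₁ v₂⦄, v₁ ∈ T z₁ → v₂ ∈ T z₂ → 0 ≤ ⟪v₁ - v₂, z₁ - z₂⟫

def graphL2 (T : F → Set F) : Set (WithLp 2 (F × F)) := {q | q.snd ∈ T q.fst}

variable {T : F → Set F} {z v w : F}

theorem toLp_mem_frechetNormal_graphL2 (hT : IsMonotoneOp T) {τ : ℝ} (hτ : 0 < τ)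
    (hv : v ∈ T z) (hvw : v + τ • w ∈ T z) :
    WithLp.toLp 2 (w, 0) ∈ frechetNormal (graphL2 T) (WithLp.toLp 2 (z, v)) := by
  refine (mem_frechetNormal_iff (show WithLp.toLp 2 (z, v) ∈ graphL2 T from hv)).2 fun δ hδ => ?_
  filter_upwards [self_mem_nhdsWithin, eventually_nhdsWithin_of_eventually_nhds
    (Metric.ball_mem_nhds _ (mul_pos hτ hδ))] with y hy hball
  set h := y - WithLp.toLp 2 (z, v)
  have hfst : h.fst = y.fst - z := rfl
  have hsnd : h.snd = y.snd - v := rfl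
  have hmono : τ * ⟪w, h.fst⟫ ≤ ⟪h.snd, h.fst⟫ := by
    have := hT hy hvw
    rw [show y.snd - (v + τ • w) = h.snd - τ • w by rw [hsnd]; abel, inner_sub_left,
      inner_smul_left, ← hfst] at this
    simpa using this
  have hh : ‖h‖ < τ * δ := by simpa [dist_eq_norm] using hball
  have hcs : ⟪h.snd, h.fst⟫ ≤ ‖h‖ * ‖h‖ :=
    (real_inner_le_norm _ _).trans (mul_le_mul (WithLp.norm_snd_le (α := F) h)
      (WithLp.norm_fst_le _ h) (norm_nonneg _) (norm_nonneg _))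
  have : ⟪WithLp.toLp 2 (w, (0 : F)), h⟫ = ⟪w, h.fst⟫ := by simp
  rw [this]
  refine le_of_mul_le_mul_left ?_ hτ
  nlinarith [norm_nonneg h]

theorem toLp_smul_sub_mem_limitingNormal_graphL2 (hT : IsMonotoneOp T) (hC : Convex ℝ (T z))
    (hv : v ∈ T z) {u₁ u₂ : F} (h₁ : u₁ ∈ T z) (h₂ : u₂ ∈ T z) {t : ℝ} (ht : 0 < t) :
    WithLp.toLp 2 (t • (u₁ - u₂), 0) ∈ limitingNormal (graphL2 T) (WithLp.toLp 2 (z, v)) := by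
  -- Base points `v + μ (u₂ - v) → v`; adding `μ (u₁ - u₂)` to them gives `v + μ (u₁ - v) ∈ T z`.
  set μ : ℕ → ℝ := fun k => 1 / (k + 1)
  have hμ (k : ℕ) : μ k ∈ Icc (0 : ℝ) 1 :=
    ⟨by positivity, div_le_one_of_le₀ (by linarith [k.cast_nonneg (α := ℝ)]) (by positivity)⟩
  have hμpos (k : ℕ) : 0 < μ k := by positivity
  refine ⟨fun k => WithLp.toLp 2 (z, v + μ k • (u₂ - v)), fun _ => WithLp.toLp 2 (t • (u₁ - u₂), 0),
    fun k => hC.add_smul_sub_mem hv h₂ (hμ k), ?_, tendsto_const_nhds, fun k => ?_⟩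
  · have hlim : Tendsto (fun k => v + μ k • (u₂ - v)) atTop (𝓝 v) := by
      simpa [μ] using tendsto_const_nhds.add
        ((tendsto_one_div_add_atTop_nhds_zero_nat (𝕜 := ℝ)).smul_const (u₂ - v))
    exact ((WithLp.prod_continuous_toLp 2 F F).tendsto _).comp (tendsto_const_nhds.prodMk_nhds hlim)
  · refine toLp_mem_frechetNormal_graphL2 hT (div_pos (hμpos k) ht)
      (hC.add_smul_sub_mem hv h₂ (hμ k)) ?_
    convert hC.add_smul_sub_mem hv h₁ (hμ k) using 1
    rw [smul_smul, div_mul_cancel₀ _ ht.ne']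
    module

end MonotoneGraph

section Subdifferential

variable {θ : F → EReal} {z z' v c : F}

theorem convex_subdiff (θ : F → EReal) (z : F) : Convex ℝ (subdiff θ z) := by
  intro v₁ h₁ v₂ h₂ a b ha hb hab z'
  have hcombo : ⟪a • v₁ + b • v₂, z' - z⟫ ≤ max ⟪v₁, z' - z⟫ ⟪v₂, z' - z⟫ := by
    simpa [inner_add_left, inner_smul_left] using
      Convex.combo_le_max ⟪v₁, z' - z⟫ ⟪v₂, z' - z⟫ ha hb hab
  refine le_trans (add_le_add_right (EReal.coe_le_coe_iff.2 hcombo) _) ?_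
  rcases le_total ⟪v₁, z' - z⟫ ⟪v₂, z' - z⟫ with h | h
  · simpa [max_eq_right h] using h₂ z'
  · simpa [max_eq_left h] using h₁ z'

theorem le_of_mem_subdiff {r r' : ℝ} (hv : v ∈ subdiff θ z) (hz : θ z = r) (hz' : θ z' = r') :
    r + ⟪v, z' - z⟫ ≤ r' := by
  have := hv z'
  rwa [hz, hz', ← EReal.coe_add, EReal.coe_le_coe_iff] at this

theorem ne_top_of_mem_subdiff (hz' : θ z' ≠ ⊤) (hv : v ∈ subdiff θ z) : θ z ≠ ⊤ := by
  intro hz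
  have := hv z'
  rw [hz, EReal.top_add_coe, top_le_iff] at this
  exact hz' this

theorem isMonotoneOp_subdiff (hbot : ∀ z, θ z ≠ ⊥) {z₀ : F} (hz₀ : θ z₀ ≠ ⊤) :
    IsMonotoneOp (subdiff θ) := by
  intro z₁ z₂ v₁ v₂ h₁ h₂
  lift θ z₁ to ℝ using ⟨ne_top_of_mem_subdiff hz₀ h₁, hbot z₁⟩ with r₁ hr₁
  lift θ z₂ to ℝ using ⟨ne_top_of_mem_subdiff hz₀ h₂, hbot z₂⟩ with r₂ hr₂
  have e₁ := le_of_mem_subdiff h₁ hr₁.symm hr₂.symm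
  have e₂ := le_of_mem_subdiff h₂ hr₂.symm hr₁.symm
  rw [← neg_sub z₁ z₂, inner_neg_right] at e₁
  rw [inner_sub_left]
  linarith

theorem eventually_mem_subdiff_add_smul {r s : ℝ} (hz : θ z = r)
    (hθ : ∀ᶠ t in 𝓝 (0 : ℝ), θ (z + t • c) = ↑(r + t * s)) (hv : v ∈ subdiff θ z) :
    ∀ᶠ t in 𝓝 (0 : ℝ), v ∈ subdiff θ (z + t • c) := by
  have hslope {t : ℝ} (ht : θ (z + t • c) = ↑(r + t * s)) : t * ⟪v, c⟫ ≤ t * s := by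
    have := le_of_mem_subdiff hv hz ht
    rwa [add_sub_cancel_left, inner_smul_right, add_le_add_iff_left] at this
  obtain ⟨t₁, ht₁, ht₁pos⟩ := ((hθ.filter_mono nhdsWithin_le_nhds).and
    (self_mem_nhdsWithin : Ioi (0 : ℝ) ∈ 𝓝[>] 0)).exists
  obtain ⟨t₂, ht₂, ht₂neg⟩ := ((hθ.filter_mono nhdsWithin_le_nhds).and
    (self_mem_nhdsWithin : Iio (0 : ℝ) ∈ 𝓝[<] 0)).exists
  have hvc : ⟪v, c⟫ = s := le_antisymm
    (le_of_mul_le_mul_left (hslope ht₁) ht₁pos)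
    ((mul_le_mul_left_of_neg ht₂neg).1 (hslope ht₂))
  filter_upwards [hθ] with t ht z''
  rw [ht, ← EReal.coe_add]
  convert hv z'' using 1
  rw [hz, ← EReal.coe_add, EReal.coe_eq_coe_iff, sub_add_eq_sub_sub, inner_sub_right _ (z'' - z),
    inner_smul_right, hvc]
  ring

end Subdifferential

theorem Convex.exists_smul_sub_of_mem_span_sub {E : Type*} [AddCommGroup E] [Module ℝ E]
    {C : Set E} (hC : Convex ℝ C) (hne : C.Nonempty) {w : E}
    (hw : w ∈ Submodule.span ℝ (C - C)) : ∃ u₁ ∈ C, ∃ u₂ ∈ C, ∃ t > (0 : ℝ), w = t • (u₁ - u₂) := by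
  set K := ConvexCone.hull ℝ (C - C)
  have hK {x : E} : x ∈ K ↔ ∃ u₁ ∈ C, ∃ u₂ ∈ C, ∃ t > (0 : ℝ), x = t • (u₁ - u₂) := by
    rw [ConvexCone.mem_hull_of_convex (hC.sub hC)]
    constructor
    · rintro ⟨t, ht, _, ⟨u₁, h₁, u₂, h₂, rfl⟩, rfl⟩
      exact ⟨u₁, h₁, u₂, h₂, t, ht, rfl⟩
    · rintro ⟨u₁, h₁, u₂, h₂, t, ht, rfl⟩
      exact ⟨t, ht, _, ⟨u₁, h₁, u₂, h₂, rfl⟩, rfl⟩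
  rw [← hK]
  obtain ⟨u, hu⟩ := hne
  have hzero : (0 : E) ∈ K := hK.2 ⟨u, hu, u, hu, 1, one_pos, by simp⟩
  induction hw using Submodule.span_induction with
  | mem x hx => exact ConvexCone.subset_hull hx
  | zero => exact hzero
  | add x y _ _ hx hy => exact K.add_mem hx hy
  | smul r x _ hx =>
    rcases lt_trichotomy r 0 with hr | rfl | hr
    · obtain ⟨u₁, h₁, u₂, h₂, t, ht, rfl⟩ := hK.1 hx
      refine hK.2 ⟨u₂, h₂, u₁, h₁, -r * t, mul_pos (neg_pos.2 hr) ht, ?_⟩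
      module
    · simpa using hzero
    · exact K.smul_mem hr hx

section CPWL

variable {m l p : ℕ} {a : Fin l → Euc m} {α : Fin l → ℝ} {d : Fin p → Euc m} {β : Fin p → ℝ}
  {z zb v : Euc m}

def cpwlMax (a : Fin l → Euc m) (α : Fin l → ℝ) (z : Euc m) : ℝ := ⨆ i, (⟪a i, z⟫ - α i)

theorem le_cpwlMax (a : Fin l → Euc m) (α : Fin l → ℝ) (i : Fin l) (z : Euc m) :
    ⟪a i, z⟫ - α i ≤ cpwlMax a α z :=
  le_ciSup (f := fun j => ⟪a j, z⟫ - α j) (finite_range _).bddAbove i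

theorem cpwlFun_of_mem (hz : z ∈ cpwlDom d β) : cpwlFun a α d β z = cpwlMax a α z := if_pos hz

theorem cpwlFun_of_notMem (hz : z ∉ cpwlDom d β) : cpwlFun a α d β z = ⊤ := if_neg hz

theorem cpwlFun_ne_bot : cpwlFun a α d β z ≠ ⊥ := by
  unfold cpwlFun
  split_ifs <;> simp

theorem mem_Kact_iff (hz : z ∈ cpwlDom d β) {i : Fin l} :
    i ∈ Kact a α d β z ↔ cpwlMax a α z = ⟪a i, z⟫ - α i := by
  change cpwlFun a α d β z = _ ↔ _
  rw [cpwlFun_of_mem hz, EReal.coe_eq_coe_iff]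

theorem mem_cpwlDom_of_mem_subdiff (hzb : zb ∈ cpwlDom d β)
    (hv : v ∈ subdiff (cpwlFun a α d β) z) : z ∈ cpwlDom d β := by
  by_contra hz
  exact ne_top_of_mem_subdiff (z' := zb) (by simp [cpwlFun_of_mem hzb]) hv (cpwlFun_of_notMem hz)

theorem mem_subdiff_cpwlFun_of_mem_Kact {i : Fin l} (hi : i ∈ Kact a α d β z) :
    a i ∈ subdiff (cpwlFun a α d β) z := by
  intro z'
  by_cases hz' : z' ∈ cpwlDom d β
  · rw [hi, cpwlFun_of_mem hz', ← EReal.coe_add, EReal.coe_le_coe_iff, inner_sub_right]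
    linarith [le_cpwlMax a α i z']
  · simp [cpwlFun_of_notMem hz']

theorem add_mem_subdiff_cpwlFun (hv : v ∈ subdiff (cpwlFun a α d β) z) {i : Fin p}
    (hi : i ∈ Iact d β z) : v + d i ∈ subdiff (cpwlFun a α d β) z := by
  intro z'
  by_cases hz' : z' ∈ cpwlDom d β
  · refine le_trans (add_le_add_right (EReal.coe_le_coe_iff.2 ?_) _) (hv z')
    have : ⟪d i, z'⟫ ≤ β i := hz' i
    have : ⟪d i, z⟫ = β i := hi
    rw [inner_add_left, inner_sub_right (d i)]
    linarith
  · simp [cpwlFun_of_notMem hz']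

theorem Kact_nonempty (a : Fin l → Euc m) (α : Fin l → ℝ) (hl : 0 < l) (hzb : zb ∈ cpwlDom d β) :
    (Kact a α d β zb).Nonempty := by
  have : Nonempty (Fin l) := ⟨⟨0, hl⟩⟩
  obtain ⟨i, hi⟩ := exists_eq_ciSup_of_finite (f := fun i => ⟪a i, zb⟫ - α i)
  exact ⟨i, (mem_Kact_iff hzb).2 hi.symm⟩

theorem eventually_cpwlMax_eq_iSup_Kact (a : Fin l → Euc m) (α : Fin l → ℝ) (hl : 0 < l)
    (hzb : zb ∈ cpwlDom d β) :
    ∀ᶠ z in 𝓝 zb, cpwlMax a α z = ⨆ i : Kact a α d β zb, (⟪a i, z⟫ - α i) := by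
  obtain ⟨i₀, hi₀⟩ := Kact_nonempty a α hl hzb
  have : Nonempty (Fin l) := ⟨i₀⟩
  have : Nonempty (Kact a α d β zb) := ⟨⟨i₀, hi₀⟩⟩
  have hcont (i : Fin l) : Continuous fun z : Euc m => ⟪a i, z⟫ - α i := by fun_prop
  have hstrict : ∀ᶠ z in 𝓝 zb, ∀ i ∉ Kact a α d β zb, ⟪a i, z⟫ - α i < ⟪a i₀, z⟫ - α i₀ := by
    refine eventually_all.2 fun i => ?_
    by_cases hi : i ∈ Kact a α d β zb
    · exact Eventually.of_forall fun _ h => absurd hi h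
    · have hlt : ⟪a i, zb⟫ - α i < ⟪a i₀, zb⟫ - α i₀ := by
        rw [← (mem_Kact_iff hzb).1 hi₀]
        exact (le_cpwlMax a α i zb).lt_of_ne fun h => hi ((mem_Kact_iff hzb).2 h.symm)
      filter_upwards [(hcont i).continuousAt.eventually_lt (hcont i₀).continuousAt hlt]
        with z hz _ using hz
  filter_upwards [hstrict] with z hz
  have hbdd : BddAbove (range fun i : Kact a α d β zb => ⟪a i, z⟫ - α i) :=
    (finite_range _).bddAbove
  refine le_antisymm (ciSup_le fun i => ?_) (ciSup_le fun i => le_cpwlMax a α i z)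
  by_cases hi : i ∈ Kact a α d β zb
  · exact le_ciSup hbdd ⟨i, hi⟩
  · exact (hz i hi).le.trans (le_ciSup hbdd ⟨i₀, hi₀⟩)

theorem eventually_inner_lt_of_notMem_Iact (hzb : zb ∈ cpwlDom d β) :
    ∀ᶠ z in 𝓝 zb, ∀ i ∉ Iact d β zb, ⟪d i, z⟫ < β i := by
  refine eventually_all.2 fun i => ?_
  by_cases hi : i ∈ Iact d β zb
  · exact Eventually.of_forall fun _ h => absurd hi h
  · have hcont : Continuous fun z : Euc m => ⟪d i, z⟫ := by fun_prop
    filter_upwards [hcont.continuousAt.eventually_lt continuousAt_const ((hzb i).lt_of_ne hi)]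
      with z hz _ using hz

theorem eventually_cpwlFun_add_smul (hl : 0 < l) (hzb : zb ∈ cpwlDom d β) {c : Euc m} {s : ℝ}
    (hcK : ∀ i ∈ Kact a α d β zb, ⟪a i, c⟫ = s) (hcI : ∀ i ∈ Iact d β zb, ⟪d i, c⟫ = 0) :
    ∀ᶠ z in 𝓝 zb, z ∈ cpwlDom d β →
      ∀ᶠ t in 𝓝 (0 : ℝ), cpwlFun a α d β (z + t • c) = ↑(cpwlMax a α z + t * s) := by
  have : Nonempty (Kact a α d β zb) := (Kact_nonempty a α hl hzb).to_subtype
  filter_upwards [((eventually_cpwlMax_eq_iSup_Kact a α hl hzb).and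
    (eventually_inner_lt_of_notMem_Iact hzb)).eventually_nhds] with z hU hz
  have hline : Tendsto (fun t : ℝ => z + t • c) (𝓝 0) (𝓝 z) :=
    Continuous.tendsto' (by fun_prop) 0 z (by simp)
  filter_upwards [hline.eventually hU] with t ⟨hmax, hlt⟩
  have hdom : z + t • c ∈ cpwlDom d β := by
    intro i
    by_cases hi : i ∈ Iact d β zb
    · rw [inner_add_right, inner_smul_right, hcI i hi, mul_zero, add_zero]
      exact hz i
    · exact (hlt i hi).le
  rw [cpwlFun_of_mem hdom, EReal.coe_eq_coe_iff, hmax, hU.self_of_nhds.1,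
    ciSup_add (finite_range _).bddAbove]
  refine iSup_congr fun i => ?_
  rw [inner_add_right, inner_smul_right, hcK i i.2]
  ring

theorem eventually_add_smul_mem_graphL2_subdiff_cpwlFun (hl : 0 < l) (hzb : zb ∈ cpwlDom d β)
    {vb c : Euc m} (hcK : ∀ i ∈ Kact a α d β zb, ∀ j ∈ Kact a α d β zb, ⟪a i - a j, c⟫ = 0)
    (hcI : ∀ i ∈ Iact d β zb, ⟪d i, c⟫ = 0) :
    ∀ᶠ q in 𝓝[graphL2 (subdiff (cpwlFun a α d β))] (WithLp.toLp 2 (zb, vb)),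
      ∀ᶠ t in 𝓝 (0 : ℝ), q + t • WithLp.toLp 2 (c, 0) ∈ graphL2 (subdiff (cpwlFun a α d β)) := by
  obtain ⟨i₀, hi₀⟩ := Kact_nonempty a α hl hzb
  have hslope (i : Fin l) (hi : i ∈ Kact a α d β zb) : ⟪a i, c⟫ = ⟪a i₀, c⟫ := by
    rw [← sub_eq_zero, ← inner_sub_left]
    exact hcK i hi i₀ hi₀
  have hnear := ((by fun_prop : Continuous fun q : WithLp 2 (Euc m × Euc m) => q.fst).tendsto
    (WithLp.toLp 2 (zb, vb))).eventually (eventually_cpwlFun_add_smul hl hzb hslope hcI)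
  filter_upwards [eventually_nhdsWithin_of_eventually_nhds hnear, self_mem_nhdsWithin]
    with q hq hqG
  have hdom := mem_cpwlDom_of_mem_subdiff hzb hqG
  filter_upwards [eventually_mem_subdiff_add_smul (cpwlFun_of_mem hdom) (hq hdom) hqG] with t ht
  simpa [graphL2] using ht

theorem span_Kact_sup_span_Iact_le {vb : Euc m} (hvb : vb ∈ subdiff (cpwlFun a α d β) zb) :
    Submodule.span ℝ (image2 (fun i j => a i - a j) (Kact a α d β zb) (Kact a α d β zb)) ⊔
        Submodule.span ℝ (d '' Iact d β zb) ≤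
      Submodule.span ℝ (subdiff (cpwlFun a α d β) zb - subdiff (cpwlFun a α d β) zb) := by
  refine sup_le (Submodule.span_le.2 ?_) (Submodule.span_le.2 ?_)
  · rintro _ ⟨i, hi, j, hj, rfl⟩
    exact Submodule.subset_span (sub_mem_sub (mem_subdiff_cpwlFun_of_mem_Kact hi)
      (mem_subdiff_cpwlFun_of_mem_Kact hj))
  · rintro _ ⟨i, hi, rfl⟩
    exact Submodule.subset_span ⟨vb + d i, add_mem_subdiff_cpwlFun hvb hi, vb, hvb,
      add_sub_cancel_left _ _⟩

end CPWL

theorem mem_sosd_zero_iff {θ : F → EReal} {z v w : F} :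
    w ∈ sosd θ z v 0 ↔
      WithLp.toLp 2 (w, 0) ∈ limitingNormal (graphL2 (subdiff θ)) (WithLp.toLp 2 (z, v)) := by
  change pl2 w (-(0 : F)) ∈ limitingNormal (graphL2 (subdiff θ)) (pl2 z v) ↔ _
  rw [neg_zero]
  rfl

theorem sosd_cpwl_at_zero_general {m l p : ℕ} (hl : 0 < l)
    (a : Fin l → Euc m) (α : Fin l → ℝ) (d : Fin p → Euc m) (β : Fin p → ℝ)
    (zb : Euc m) (hzb : zb ∈ cpwlDom d β)
    (vb : Euc m) (hvb : vb ∈ subdiff (cpwlFun a α d β) zb) :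
    sosd (cpwlFun a α d β) zb vb 0 =
      (Submodule.span ℝ
          (Set.image2 (fun i j => a i - a j) (Kact a α d β zb) (Kact a α d β zb)) : Set (Euc m)) +
      (Submodule.span ℝ (d '' Iact d β zb) : Set (Euc m)) := by
  rw [← Submodule.coe_sup]
  set L := Submodule.span ℝ (image2 (fun i j => a i - a j) (Kact a α d β zb) (Kact a α d β zb)) ⊔
    Submodule.span ℝ (d '' Iact d β zb)
  ext w
  rw [mem_sosd_zero_iff, SetLike.mem_coe]
  constructor
  · intro hw
    rw [← L.orthogonal_orthogonal, Submodule.mem_orthogonal]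
    intro c hc
    have hcL := (Submodule.mem_orthogonal L c).1 hc
    have hinv := eventually_add_smul_mem_graphL2_subdiff_cpwlFun (vb := vb) hl hzb
      (fun i hi j hj => hcL _ (Submodule.mem_sup_left
        (Submodule.subset_span (mem_image2_of_mem hi hj))))
      (fun i hi => hcL _ (Submodule.mem_sup_right
        (Submodule.subset_span (mem_image_of_mem d hi))))
    simpa [real_inner_comm] using inner_eq_zero_of_mem_limitingNormal hinv hw
  · intro hw
    have hconv := convex_subdiff (cpwlFun a α d β) zb
    have hmono : IsMonotoneOp (subdiff (cpwlFun a α d β)) :=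
      isMonotoneOp_subdiff (z₀ := zb) (fun _ => cpwlFun_ne_bot) (by simp [cpwlFun_of_mem hzb])
    obtain ⟨u₁, h₁, u₂, h₂, t, ht, rfl⟩ :=
      hconv.exists_smul_sub_of_mem_span_sub ⟨vb, hvb⟩ (span_Kact_sup_span_Iact_le hvb hw)
    exact toLp_smul_sub_mem_limitingNormal_graphL2 hmono hconv hvb h₁ h₂ ht

/-- The second-order subdifferential of a CPWL function evaluated at `0`:
`∂²θ(zb,vb)(0) = span{a i - a j : i,j ∈ K(zb)} + span{d i : i ∈ I(zb)}`. -/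
theorem sosd_cpwl_at_zero {m l p : ℕ} (hl : 0 < l)
    (a : Fin l → Euc m) (α : Fin l → ℝ) (d : Fin p → Euc m) (β : Fin p → ℝ)
    (hdom : (cpwlDom d β).Nonempty) (zb : Euc m) (hzb : zb ∈ cpwlDom d β)
    (vb : Euc m) (hvb : vb ∈ subdiff (cpwlFun a α d β) zb) :
    sosd (cpwlFun a α d β) zb vb 0 =
      (Submodule.span ℝ
          (Set.image2 (fun i j => a i - a j) (Kact a α d β zb) (Kact a α d β zb)) : Set (Euc m)) +
      (Submodule.span ℝ (d '' Iact d β zb) : Set (Euc m)) :=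
  sosd_cpwl_at_zero_general hl a α d β zb hzb vb hvb
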